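/- arXiv:2602.22502 — 7 statements merged into one kernel-verified Lean document; each statement's English description precedes it below -/
import Mathlib

section
/- Fix real numbers θ with 0 < θ < 1 and let α = 1/(1-θ). If there exists N such that for all n ≥ N the prime gap satisfies p_{n+1} - p_n < p_n^θ (where p_n denotes the n-th prime), then there exists x₀ such that for all real x ≥ x₀ the interval [x^α, (x+1)^α] contains a prime. -/
open Nat

theorem stmt_0 (θ α : ℝ) (hθ0 : 0 < θ) (hθ1 : θ < 1) (hα : α = 1 / (1 - θ))
    (h : ∃ N : ℕ, ∀ n ≥ N,
      (Nat.nth Nat.Prime (n + 1) : ℝ) - Nat.nth Nat.Prime n < (Nat.nth Nat.Prime n : ℝ) ^ θ) :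
    ∃ x₀ : ℝ, ∀ x : ℝ, x₀ ≤ x →
      ∃ p : ℕ, p.Prime ∧ x ^ α ≤ (p : ℝ) ∧ (p : ℝ) ≤ (x + 1) ^ α := by
  classical
  obtain ⟨N, hN⟩ := h
  have h1θ : (0:ℝ) < 1 - θ := by linarith
  have hα1 : 1 < α := by
    rw [hα, lt_div_iff₀ h1θ]; linarith
  have hαθ : α * θ = α - 1 := by
    rw [hα]; field_simp; ring
  refine ⟨(Nat.nth Nat.Prime N : ℝ) + 2, fun x hx => ?_⟩
  have hpN0 : (0:ℝ) ≤ Nat.nth Nat.Prime N := by positivity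
  have hx1 : (1:ℝ) ≤ x := by linarith
  have hx0 : (0:ℝ) < x := by linarith
  have hxa : (Nat.nth Nat.Prime N : ℝ) < x ^ α := by
    have : x ^ (1:ℝ) ≤ x ^ α := Real.rpow_le_rpow_of_exponent_le hx1 hα1.le
    rw [Real.rpow_one] at this
    linarith
  have hxa0 : (0:ℝ) < x ^ α := by positivity
  -- there exists m with x^α ≤ nth Prime m
  have hinf := Nat.infinite_setOf_prime
  have hex : ∃ m : ℕ, x ^ α ≤ (Nat.nth Nat.Prime m : ℝ) := by
    obtain ⟨q, hq, hqp⟩ := Nat.exists_infinite_primes ⌈x ^ α⌉₊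
    refine ⟨Nat.count Nat.Prime q, ?_⟩
    rw [Nat.nth_count hqp]
    calc x ^ α ≤ (⌈x ^ α⌉₊ : ℝ) := Nat.le_ceil _
      _ ≤ (q : ℝ) := by exact_mod_cast hq
  let M := Nat.find hex
  have hM : x ^ α ≤ (Nat.nth Nat.Prime M : ℝ) := Nat.find_spec hex
  have hNM : N < M := by
    by_contra hcon
    push_neg at hcon
    have : Nat.nth Nat.Prime M ≤ Nat.nth Nat.Prime N :=
      (Nat.nth_le_nth hinf).mpr hcon
    have : (Nat.nth Nat.Prime M : ℝ) ≤ Nat.nth Nat.Prime N := by exact_mod_cast this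
    linarith
  obtain ⟨k, hk⟩ := Nat.exists_eq_add_of_lt hNM
  set n := N + k with hn
  have hMn : M = n + 1 := hk
  have hlt : (Nat.nth Nat.Prime n : ℝ) < x ^ α := by
    have hmin : ¬ x ^ α ≤ (Nat.nth Nat.Prime n : ℝ) :=
      Nat.find_min hex (by omega)
    linarith
  have hgap := hN n (by omega)
  -- nth (n+1) < nth n + (nth n)^θ < x^α + (x^α)^θ
  have hpn0 : (0:ℝ) ≤ Nat.nth Nat.Prime n := by positivity
  have hθle : (Nat.nth Nat.Prime n : ℝ) ^ θ ≤ (x ^ α) ^ θ :=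
    Real.rpow_le_rpow hpn0 hlt.le hθ0.le
  have hxaθ : (x ^ α) ^ θ = x ^ (α - 1) := by
    rw [← Real.rpow_mul hx0.le, hαθ]
  -- Bernoulli: (x+1)^α ≥ x^α + α x^(α-1)
  have hb : 1 + α * (1 / x) ≤ (1 + 1 / x) ^ α := by
    have h1x : (0:ℝ) < 1 / x := by positivity
    exact one_add_mul_self_le_rpow_one_add (by linarith) hα1.le
  have hmul : (x + 1) ^ α = x ^ α * (1 + 1 / x) ^ α := by
    rw [← Real.mul_rpow hx0.le (by positivity)]
    congr 1
    field_simp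
  have hx1div : x ^ (α - 1) = x ^ α / x := by
    rw [Real.rpow_sub hx0, Real.rpow_one]
  have hbern : x ^ α + α * x ^ (α - 1) ≤ (x + 1) ^ α := by
    have h2 : x ^ α * (1 + α * (1 / x)) ≤ x ^ α * (1 + 1 / x) ^ α :=
      mul_le_mul_of_nonneg_left hb hxa0.le
    rw [hmul]
    calc x ^ α + α * x ^ (α - 1) = x ^ α * (1 + α * (1 / x)) := by
          rw [hx1div]; field_simp
      _ ≤ _ := h2
  have hxα1pos : (0:ℝ) ≤ x ^ (α - 1) := by positivity
  refine ⟨Nat.nth Nat.Prime M, Nat.nth_mem_of_infinite hinf M, hM, ?_⟩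
  rw [hMn]
  have : (1:ℝ) * x ^ (α - 1) ≤ α * x ^ (α - 1) :=
    mul_le_mul_of_nonneg_right hα1.le hxα1pos
  nlinarith [hgap, hθle, hxaθ, hbern, hlt]
end

section
/- Let N be a positive integer and suppose that for every integer n with 1 ≤ n ≤ N, both intervals [n², n(n+1)] and [n(n+1), (n+1)²] contain a prime. Then for every real α ≥ 2 and real x ≥ 1 with x^(α/2) < N, the interval [x^α, (x+1)^α] contains a prime. -/
/-! Put `y = x ^ (α / 2) ≥ 1`. Then `x ^ α = y ^ 2` and, by superadditivity of `t ↦ t ^ (α / 2)`,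
`(y + 1) ^ 2 ≤ (x + 1) ^ α`, so it suffices to find a prime in `[y ^ 2, (y + 1) ^ 2]`. With
`n = ⌊y⌋ < N`: if `y ≥ n + 1/2`, the prime in `[(n + 1) ^ 2, (n + 1) (n + 2)]` works; otherwise
`y ^ 2 < n (n + 1) + 1/4`, and the prime in `[n (n + 1), (n + 1) ^ 2]` works because it cannot equal
the composite `n (n + 1)` once `n ≥ 2` (for `n = 1` the prime `3` does). -/

def PrimeInIcc (a b : ℝ) : Prop := ∃ p : ℕ, p.Prime ∧ a ≤ p ∧ p ≤ b

lemma PrimeInIcc.mono {a b a' b' : ℝ} (h : PrimeInIcc a b) (ha : a' ≤ a) (hb : b ≤ b') :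
    PrimeInIcc a' b' :=
  let ⟨p, hp, hap, hpb⟩ := h
  ⟨p, hp, ha.trans hap, hpb.trans hb⟩

lemma primeInIcc_natCast {a b : ℕ} :
    PrimeInIcc a b ↔ ∃ p : ℕ, p.Prime ∧ a ≤ p ∧ p ≤ b := by
  simp only [PrimeInIcc, Nat.cast_le]

lemma Nat.Prime.mul_lt_of_mul_le {a b p : ℕ} (hp : p.Prime) (ha : a ≠ 1) (hb : b ≠ 1)
    (h : a * b ≤ p) : a * b < p :=
  h.lt_of_ne fun e ↦ Nat.not_prime_mul ha hb (e ▸ hp)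

lemma rpow_half_add_one_sq_le {x α : ℝ} (hx : 0 ≤ x) (hα : 2 ≤ α) :
    (x ^ (α / 2) + 1) ^ 2 ≤ (x + 1) ^ α := by
  have hsuper : x ^ (α / 2) + 1 ≤ (x + 1) ^ (α / 2) := by
    simpa using Real.add_rpow_le_rpow_add hx zero_le_one (by linarith : 1 ≤ α / 2)
  calc (x ^ (α / 2) + 1) ^ 2 ≤ ((x + 1) ^ (α / 2)) ^ 2 := by gcongr
    _ = (x + 1) ^ α := by rw [← Real.rpow_mul_natCast (by linarith)]; norm_num

lemma primeInIcc_sq_of_half_le {n : ℕ} {y : ℝ} (hny : n + 1 / 2 ≤ y) (hyn : y < n + 1)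
    (h : PrimeInIcc ((n + 1) ^ 2) ((n + 1) * (n + 2))) :
    PrimeInIcc (y ^ 2) ((y + 1) ^ 2) :=
  h.mono (by gcongr; linarith) (by nlinarith)

lemma primeInIcc_sq_of_lt_add_half {n : ℕ} {y : ℝ} (hn : 2 ≤ n) (hny : n ≤ y)
    (hyn : y < n + 1 / 2) (h : ∃ p : ℕ, p.Prime ∧ n * (n + 1) ≤ p ∧ p ≤ (n + 1) ^ 2) :
    PrimeInIcc (y ^ 2) ((y + 1) ^ 2) := by
  obtain ⟨p, hp, hnp, hpn⟩ := h
  have hlt : n * (n + 1) + 1 ≤ p := hp.mul_lt_of_mul_le (by omega) (by omega) hnp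
  have hlt' : (n : ℝ) * (n + 1) + 1 ≤ p := by exact_mod_cast hlt
  have hpn' : (p : ℝ) ≤ (n + 1) ^ 2 := by exact_mod_cast hpn
  exact ⟨p, hp, by nlinarith, by nlinarith⟩

lemma primeInIcc_sq_of_sq_le_three {y : ℝ} (hy : 1 ≤ y) (h : y ^ 2 ≤ 3) :
    PrimeInIcc (y ^ 2) ((y + 1) ^ 2) :=
  ⟨3, Nat.prime_three, by push_cast; linarith, by push_cast; nlinarith⟩

theorem primeInIcc_sq_add_one_sq {N : ℕ}
    (h : ∀ n : ℕ, 1 ≤ n → n ≤ N →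
      (∃ p : ℕ, p.Prime ∧ n ^ 2 ≤ p ∧ p ≤ n * (n + 1)) ∧
      (∃ p : ℕ, p.Prime ∧ n * (n + 1) ≤ p ∧ p ≤ (n + 1) ^ 2))
    {y : ℝ} (hy : 1 ≤ y) (hyN : y < N) :
    PrimeInIcc (y ^ 2) ((y + 1) ^ 2) := by
  set n := ⌊y⌋₊
  have hn : 1 ≤ n := Nat.le_floor (by exact_mod_cast hy)
  have hny : (n : ℝ) ≤ y := Nat.floor_le (by linarith)
  have hyn : y < n + 1 := Nat.lt_floor_add_one y
  have hnN : n < N := by exact_mod_cast hny.trans_lt hyN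
  rcases le_or_gt ((n : ℝ) + 1 / 2) y with hhalf | hhalf
  · refine primeInIcc_sq_of_half_le hhalf hyn ?_
    have := primeInIcc_natCast.2 (h (n + 1) (by omega) hnN).1
    push_cast at this
    convert this using 2
    ring
  · rcases hn.eq_or_lt with hn1 | hn2
    · rw [← hn1, Nat.cast_one] at hhalf
      exact primeInIcc_sq_of_sq_le_three hy (by nlinarith)
    · exact primeInIcc_sq_of_lt_add_half hn2 hny hhalf (h n hn hnN.le).2

theorem stmt_3_general (N : ℕ)
    (h : ∀ n : ℕ, 1 ≤ n → n ≤ N →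
      (∃ p : ℕ, p.Prime ∧ n ^ 2 ≤ p ∧ p ≤ n * (n + 1)) ∧
      (∃ p : ℕ, p.Prime ∧ n * (n + 1) ≤ p ∧ p ≤ (n + 1) ^ 2)) :
    ∀ α x : ℝ, 2 ≤ α → 1 ≤ x → x ^ (α / 2) < (N : ℝ) →
      ∃ p : ℕ, p.Prime ∧ x ^ α ≤ (p : ℝ) ∧ (p : ℝ) ≤ (x + 1) ^ α := by
  intro α x hα hx hxN
  have hx0 : 0 ≤ x := by linarith
  have hy : 1 ≤ x ^ (α / 2) := Real.one_le_rpow hx (by linarith)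
  have hsq : (x ^ (α / 2)) ^ 2 = x ^ α := by
    rw [← Real.rpow_mul_natCast hx0]; norm_num
  refine (primeInIcc_sq_add_one_sq h hy hxN).mono hsq.ge ?_
  exact rpow_half_add_one_sq_le hx0 hα

theorem stmt_3 (N : ℕ) (hN : 0 < N)
    (h : ∀ n : ℕ, 1 ≤ n → n ≤ N →
      (∃ p : ℕ, p.Prime ∧ n ^ 2 ≤ p ∧ p ≤ n * (n + 1)) ∧
      (∃ p : ℕ, p.Prime ∧ n * (n + 1) ≤ p ∧ p ≤ (n + 1) ^ 2)) :
    ∀ α x : ℝ, 2 ≤ α → 1 ≤ x → x ^ (α / 2) < (N : ℝ) →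
      ∃ p : ℕ, p.Prime ∧ x ^ α ≤ (p : ℝ) ∧ (p : ℝ) ≤ (x + 1) ^ α :=
  stmt_3_general N h
end

section
/- Let N be a positive integer and suppose that for every integer n with 1 ≤ n ≤ N, both intervals [n², n(n+1)] and [n(n+1), (n+1)²] contain a prime. Then for every real y with 1 ≤ y < N, the interval [y², (y+1)²] contains a prime. -/
/-!
Let `n = ⌊y⌋`, so `n ≤ y < n + 1`. If `y² ≤ n(n+1)`, a prime of `[n(n+1), (n+1)²]` works.
Otherwise `y² > n(n+1)`, so `(y+1)² > n² + 3n + 1 = (n+1)(n+2) - 1`, and a prime of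
`[(n+1)², (n+1)(n+2)]` works, since it cannot be the composite number `(n+1)(n+2)`.
-/

theorem Nat.Prime.lt_mul_succ_of_le {p m : ℕ} (hp : p.Prime) (hm : 2 ≤ m)
    (h : p ≤ m * (m + 1)) : p < m * (m + 1) :=
  h.lt_of_ne fun he => Nat.not_prime_mul (by omega) (by omega) (he ▸ hp)

section

variable {y : ℝ} {n : ℕ}

theorem exists_prime_sq_of_sq_le_mul_succ (hny : (n : ℝ) ≤ y)
    (hy : y ^ 2 ≤ n * (n + 1))
    (hp : ∃ p : ℕ, p.Prime ∧ n * (n + 1) ≤ p ∧ p ≤ (n + 1) ^ 2) :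
    ∃ p : ℕ, p.Prime ∧ y ^ 2 ≤ (p : ℝ) ∧ (p : ℝ) ≤ (y + 1) ^ 2 := by
  obtain ⟨p, hp, hp₁, hp₂⟩ := hp
  have hp₁ : ((n * (n + 1) : ℕ) : ℝ) ≤ p := by exact_mod_cast hp₁
  have hp₂ : (p : ℝ) ≤ ((n : ℝ) + 1) ^ 2 := by exact_mod_cast hp₂
  push_cast at hp₁
  refine ⟨p, hp, hy.trans hp₁, hp₂.trans ?_⟩
  gcongr

theorem exists_prime_sq_of_mul_succ_lt_sq (hn : 1 ≤ n) (hny : (n : ℝ) ≤ y)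
    (hyn : y < n + 1) (hy : n * (n + 1) < y ^ 2)
    (hp : ∃ p : ℕ, p.Prime ∧ (n + 1) ^ 2 ≤ p ∧ p ≤ (n + 1) * (n + 1 + 1)) :
    ∃ p : ℕ, p.Prime ∧ y ^ 2 ≤ (p : ℝ) ∧ (p : ℝ) ≤ (y + 1) ^ 2 := by
  obtain ⟨p, hp, hp₁, hp₂⟩ := hp
  have hp₂ : p + 1 ≤ (n + 1) * (n + 1 + 1) := hp.lt_mul_succ_of_le (by omega) hp₂
  have hp₁ : ((n : ℝ) + 1) ^ 2 ≤ p := by exact_mod_cast hp₁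
  have hp₂ : (p : ℝ) + 1 ≤ ((n : ℝ) + 1) * (n + 1 + 1) := by exact_mod_cast hp₂
  refine ⟨p, hp, ?_, ?_⟩ <;> nlinarith

end

theorem stmt_4_general (N : ℕ)
    (h : ∀ n : ℕ, 1 ≤ n → n ≤ N →
      (∃ p : ℕ, p.Prime ∧ n ^ 2 ≤ p ∧ p ≤ n * (n + 1)) ∧
      (∃ p : ℕ, p.Prime ∧ n * (n + 1) ≤ p ∧ p ≤ (n + 1) ^ 2)) :
    ∀ y : ℝ, 1 ≤ y → y < (N : ℝ) →
      ∃ p : ℕ, p.Prime ∧ y ^ 2 ≤ (p : ℝ) ∧ (p : ℝ) ≤ (y + 1) ^ 2 := by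
  intro y hy₁ hyN
  set n := ⌊y⌋₊
  have hn₁ : 1 ≤ n := Nat.le_floor (by exact_mod_cast hy₁)
  have hny : (n : ℝ) ≤ y := Nat.floor_le (zero_le_one.trans hy₁)
  have hyn : y < n + 1 := Nat.lt_floor_add_one y
  have hnN : n + 1 ≤ N := by exact_mod_cast (show (n : ℝ) < N by linarith)
  rcases le_or_gt (y ^ 2) (n * (n + 1)) with hy | hy
  · exact exists_prime_sq_of_sq_le_mul_succ hny hy (h n hn₁ (by omega)).2
  · exact exists_prime_sq_of_mul_succ_lt_sq hn₁ hny hyn hy (h (n + 1) (by omega) hnN).1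

theorem stmt_4 (N : ℕ) (hN : 0 < N)
    (h : ∀ n : ℕ, 1 ≤ n → n ≤ N →
      (∃ p : ℕ, p.Prime ∧ n ^ 2 ≤ p ∧ p ≤ n * (n + 1)) ∧
      (∃ p : ℕ, p.Prime ∧ n * (n + 1) ≤ p ∧ p ≤ (n + 1) ^ 2)) :
    ∀ y : ℝ, 1 ≤ y → y < (N : ℝ) →
      ∃ p : ℕ, p.Prime ∧ y ^ 2 ≤ (p : ℝ) ∧ (p : ℝ) ≤ (y + 1) ^ 2 :=
  stmt_4_general N h
end

section
/- Assume that for all real y ≥ 4 there is a prime in the interval [y, y + (22/25)√y·log y]. Let α > 2 and let x ≥ 1 be real satisfying x^(α/2−1) ≥ (22/25)·log x. Then the interval [x^α, (x+1)^α − 1) contains a prime. -/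
/-!
Write `y = x ^ α`. Squaring Bernoulli's inequality for the exponent `α / 2 ≥ 1` gives
`(x + 1) ^ α ≥ y + α x ^ (α - 1) + (α² / 4) x ^ (α - 2) > y + α x ^ (α - 1) + 1`, so it suffices to
find a prime in `[y, y + α x ^ (α - 1)]`. For `y ≥ 4` the short-interval hypothesis supplies one,
since the hypothesis on `x` gives `(22/25) √y log y ≤ α x ^ (α - 1)`. For `y < 4`
one of `2, 3, 5` lies in `[y, y + 2]`, and `2 < α x ^ (α - 1)`.
-/

open Real

lemma one_add_mul_add_sq_le_rpow_one_add {s p : ℝ} (hs : 0 ≤ s) (hp : 2 ≤ p) :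
    1 + p * s + p ^ 2 / 4 * s ^ 2 ≤ (1 + s) ^ p := by
  have hbernoulli : 1 + p / 2 * s ≤ (1 + s) ^ (p / 2) :=
    one_add_mul_self_le_rpow_one_add (by linarith) (by linarith)
  calc 1 + p * s + p ^ 2 / 4 * s ^ 2 = (1 + p / 2 * s) ^ 2 := by ring
    _ ≤ ((1 + s) ^ (p / 2)) ^ 2 := pow_le_pow_left₀ (by positivity) hbernoulli 2
    _ = (1 + s) ^ p := by rw [← rpow_natCast, ← rpow_mul (by linarith)]; norm_num

lemma rpow_add_mul_rpow_sub_one_add_sq_le {x α : ℝ} (hx : 0 < x) (hα : 2 ≤ α) :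
    x ^ α + α * x ^ (α - 1) + α ^ 2 / 4 * x ^ (α - 2) ≤ (x + 1) ^ α := by
  have hsplit : x + 1 = x * (1 + x⁻¹) := by field_simp
  calc x ^ α + α * x ^ (α - 1) + α ^ 2 / 4 * x ^ (α - 2)
      = x ^ α * (1 + α * x⁻¹ + α ^ 2 / 4 * x⁻¹ ^ 2) := by
        rw [rpow_sub hx, rpow_sub hx, rpow_one, rpow_two]; field_simp
    _ ≤ x ^ α * (1 + x⁻¹) ^ α :=
        mul_le_mul_of_nonneg_left (one_add_mul_add_sq_le_rpow_one_add (by positivity) hα)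
          (by positivity)
    _ = (x + 1) ^ α := by rw [hsplit, mul_rpow hx.le (by positivity)]

lemma rpow_add_mul_rpow_sub_one_add_one_lt {x α : ℝ} (hx : 1 ≤ x) (hα : 2 < α) :
    x ^ α + α * x ^ (α - 1) + 1 < (x + 1) ^ α := by
  have hpow : 1 ≤ x ^ (α - 2) := one_le_rpow hx (by linarith)
  have hcoeff : 1 < α ^ 2 / 4 := by nlinarith
  have := rpow_add_mul_rpow_sub_one_add_sq_le (by linarith : 0 < x) hα.le
  nlinarith

lemma mul_sqrt_rpow_mul_log_rpow_le {c x α : ℝ} (hx : 0 < x) (hα : 0 ≤ α)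
    (h : c * log x ≤ x ^ (α / 2 - 1)) :
    c * √(x ^ α) * log (x ^ α) ≤ α * x ^ (α - 1) := by
  have hsqrt : √(x ^ α) = x ^ (α / 2) := by
    rw [sqrt_eq_rpow, ← rpow_mul hx.le]; ring_nf
  calc c * √(x ^ α) * log (x ^ α) = α * (x ^ (α / 2) * (c * log x)) := by
        rw [hsqrt, log_rpow hx]; ring
    _ ≤ α * (x ^ (α / 2) * x ^ (α / 2 - 1)) := by gcongr
    _ = α * x ^ (α - 1) := by rw [← rpow_add hx]; ring_nf

lemma exists_prime_mem_Icc_add_two {y : ℝ} (hy0 : 0 ≤ y) (hy : y < 4) :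
    ∃ p : ℕ, p.Prime ∧ y ≤ p ∧ (p : ℝ) ≤ y + 2 := by
  by_cases h2 : y ≤ 2
  · exact ⟨2, Nat.prime_two, by exact_mod_cast h2, by push_cast; linarith⟩
  by_cases h3 : y ≤ 3
  · exact ⟨3, Nat.prime_three, by exact_mod_cast h3, by push_cast; linarith⟩
  · exact ⟨5, Nat.prime_five, by push_cast; linarith, by push_cast; linarith⟩

theorem stmt_11
    (hRH : ∀ y : ℝ, 4 ≤ y → ∃ p : ℕ, p.Prime ∧ y ≤ (p : ℝ) ∧
      (p : ℝ) ≤ y + 22 / 25 * Real.sqrt y * Real.log y)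
    (α x : ℝ) (hα : 2 < α) (hx : 1 ≤ x)
    (hineq : (22 / 25 : ℝ) * Real.log x ≤ x ^ (α / 2 - 1)) :
    ∃ p : ℕ, p.Prime ∧ x ^ α ≤ (p : ℝ) ∧ (p : ℝ) < (x + 1) ^ α - 1 := by
  have hx0 : 0 < x := by linarith
  have hgap := rpow_add_mul_rpow_sub_one_add_one_lt hx hα
  suffices ∃ p : ℕ, p.Prime ∧ x ^ α ≤ (p : ℝ) ∧ (p : ℝ) ≤ x ^ α + α * x ^ (α - 1) by
    obtain ⟨p, hp, hlow, hupp⟩ := this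
    exact ⟨p, hp, hlow, by linarith⟩
  by_cases hlarge : 4 ≤ x ^ α
  · obtain ⟨p, hp, hlow, hupp⟩ := hRH _ hlarge
    have := mul_sqrt_rpow_mul_log_rpow_le hx0 (by linarith) hineq
    exact ⟨p, hp, hlow, by linarith⟩
  · obtain ⟨p, hp, hlow, hupp⟩ :=
      exists_prime_mem_Icc_add_two (by positivity) (not_le.mp hlarge)
    have : 1 ≤ x ^ (α - 1) := one_le_rpow hx (by linarith)
    exact ⟨p, hp, hlow, by nlinarith⟩
end

section
/- Let α > 1 and suppose there exists n₀ such that for every integer n ≥ n₀ the interval [n^α, (n+1)^α − 1) contains a prime. Then there exists a real number A > 1 such that for every positive integer n, ⌊A^(α^n)⌋ is a prime. -/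
/-!
Mills' construction. Starting from any prime `p₀ ≥ n₀`, the hypothesis produces primes with
`p_k ^ α ≤ p_{k+1}` and `p_{k+1} + 1 < (p_k + 1) ^ α`. Rescaling by `α ^ k`, the numbers
`log p_k / α ^ k` increase and `log (p_k + 1) / α ^ k` strictly decrease, so a common point `L`
of the nested intervals gives `p_n ≤ (exp L) ^ (α ^ n) < p_n + 1` for every `n`.
-/

open Real Set

theorem exists_seq_of_forall_exists {β : Type*} {P : β → Prop} {R : β → β → Prop}
    (h : ∀ x, P x → ∃ y, P y ∧ R x y) {x₀ : β} (hx₀ : P x₀) :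
    ∃ u : ℕ → β, (∀ k, P (u k)) ∧ ∀ k, R (u k) (u (k + 1)) := by
  choose f hfP hfR using h
  let v : ℕ → {x // P x} := fun k => (fun y => ⟨f y.1 y.2, hfP _ _⟩)^[k] ⟨x₀, hx₀⟩
  refine ⟨fun k => (v k).1, fun k => (v k).2, fun k => ?_⟩
  simp only [v, Function.iterate_succ_apply']
  exact hfR _ _

theorem exists_forall_mem_Ico_of_monotone_of_strictAnti {β : Type*} [ConditionallyCompleteLattice β]
    {f g : ℕ → β} (hf : Monotone f) (hg : StrictAnti g) (h : f ≤ g) :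
    ∃ c, ∀ n, c ∈ Ico (f n) (g n) := by
  have hc := mem_iInter.1 (hf.ciSup_mem_iInter_Icc_of_antitone hg.antitone h)
  exact ⟨⨆ n, f n, fun n => ⟨(hc n).1, (hc (n + 1)).2.trans_lt (hg n.lt_succ_self)⟩⟩

theorem log_rpow_div_pow_succ {α x : ℝ} (hα : 0 < α) (hx : 0 < x) (k : ℕ) :
    log (x ^ α) / α ^ (k + 1) = log x / α ^ k := by
  rw [log_rpow hx, pow_succ]
  field_simp

theorem exists_forall_rpow_pow_mem_Ico {α : ℝ} (hα : 0 < α) {x : ℕ → ℝ} (hx : ∀ k, 0 < x k)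
    (hlow : ∀ k, x k ^ α ≤ x (k + 1)) (hup : ∀ k, x (k + 1) + 1 < (x k + 1) ^ α) :
    ∃ A, ∀ n, A ^ (α ^ n) ∈ Ico (x n) (x n + 1) := by
  have hx₁ k : 0 < x k + 1 := by linarith [hx k]
  have hαk k : 0 < α ^ k := pow_pos hα k
  have hmono : Monotone fun k => log (x k) / α ^ k := monotone_nat_of_le_succ fun k => by
    rw [← log_rpow_div_pow_succ hα (hx k)]
    exact div_le_div_of_nonneg_right (log_le_log (rpow_pos_of_pos (hx k) α) (hlow k)) (hαk _).le
  have hanti : StrictAnti fun k => log (x k + 1) / α ^ k := strictAnti_nat_of_succ_lt fun k => by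
    rw [← log_rpow_div_pow_succ hα (hx₁ k)]
    exact div_lt_div_of_pos_right (log_lt_log (hx₁ _) (hup k)) (hαk _)
  have hle : (fun k => log (x k) / α ^ k) ≤ fun k => log (x k + 1) / α ^ k := fun k =>
    div_le_div_of_nonneg_right (log_le_log (hx k) (by linarith)) (hαk _).le
  obtain ⟨L, hL⟩ := exists_forall_mem_Ico_of_monotone_of_strictAnti hmono hanti hle
  refine ⟨exp L, fun n => ?_⟩
  obtain ⟨hlo, hhi⟩ := hL n
  rw [← exp_mul]
  constructor
  · calc x n = exp (log (x n)) := (exp_log (hx n)).symm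
      _ ≤ exp (L * α ^ n) := exp_le_exp.2 ((div_le_iff₀ (hαk n)).1 hlo)
  · calc exp (L * α ^ n) < exp (log (x n + 1)) := exp_lt_exp.2 ((lt_div_iff₀ (hαk n)).1 hhi)
      _ = x n + 1 := exp_log (hx₁ n)

theorem exists_seq_prime_rpow_le_lt_rpow {α : ℝ} (hα : 1 ≤ α) {n₀ : ℕ}
    (h : ∀ n : ℕ, n₀ ≤ n →
      ∃ p : ℕ, p.Prime ∧ (n : ℝ) ^ α ≤ (p : ℝ) ∧ (p : ℝ) < ((n : ℝ) + 1) ^ α - 1) :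
    ∃ p : ℕ → ℕ, (∀ k, (p k).Prime) ∧
      ∀ k, (p k : ℝ) ^ α ≤ p (k + 1) ∧ (p (k + 1) : ℝ) < ((p k : ℝ) + 1) ^ α - 1 := by
  obtain ⟨q, hq, hq_prime⟩ := Nat.exists_infinite_primes n₀
  obtain ⟨p, hp, hstep⟩ := exists_seq_of_forall_exists
    (P := fun p : ℕ => p.Prime ∧ n₀ ≤ p)
    (R := fun p r : ℕ => (p : ℝ) ^ α ≤ r ∧ (r : ℝ) < ((p : ℝ) + 1) ^ α - 1)
    (fun p ⟨hp_prime, hp⟩ => by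
      obtain ⟨r, hr, hlow, hup⟩ := h p hp
      have hpr : (p : ℝ) ≤ r :=
        (self_le_rpow_of_one_le (by exact_mod_cast hp_prime.one_le) hα).trans hlow
      exact ⟨r, ⟨hr, hp.trans (by exact_mod_cast hpr)⟩, hlow, hup⟩)
    ⟨hq_prime, hq⟩
  exact ⟨p, fun k => (hp k).1, hstep⟩

theorem stmt_13 (α : ℝ) (hα : 1 < α)
    (h : ∃ n₀ : ℕ, ∀ n : ℕ, n₀ ≤ n →
      ∃ p : ℕ, p.Prime ∧ (n : ℝ) ^ α ≤ (p : ℝ) ∧ (p : ℝ) < ((n : ℝ) + 1) ^ α - 1) :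
    ∃ A : ℝ, 1 < A ∧ ∀ n : ℕ, 0 < n → Prime ⌊A ^ (α ^ n)⌋ := by
  obtain ⟨n₀, h⟩ := h
  obtain ⟨p, hp, hstep⟩ := exists_seq_prime_rpow_le_lt_rpow hα.le h
  obtain ⟨A, hA⟩ := exists_forall_rpow_pow_mem_Ico (x := fun k => (p k : ℝ)) (by linarith)
    (fun k => by exact_mod_cast (hp k).pos) (fun k => (hstep k).1)
    (fun k => by linarith [(hstep k).2])
  have hfloor n : ⌊A ^ (α ^ n)⌋ = p n := Int.floor_eq_iff.2 (by exact_mod_cast hA n)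
  refine ⟨A, ?_, fun n _ => hfloor n ▸ Nat.prime_iff_prime_int.1 (hp n)⟩
  have hp₀ : (1 : ℝ) < p 0 := by exact_mod_cast (hp 0).one_lt
  simpa using hp₀.trans_le (hA 0).1
end

section
/- Let α > 1 and let (q_n) be a sequence of primes satisfying q_n^α ≤ q_{n+1} < (q_n + 1)^α − 1 for all n ≥ 1. Then the sequence q_n^(α^(−n)) is weakly increasing, the sequence (q_n + 1)^(α^(−n)) is strictly decreasing, and q_n^(α^(−n)) < (q_m + 1)^(α^(−m)) for all n, m. -/
theorem stmt_14 (α : ℝ) (hα : 1 < α) (q : ℕ → ℕ)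
    (hq : ∀ n : ℕ, 1 ≤ n → (q n).Prime)
    (hrec : ∀ n : ℕ, 1 ≤ n →
      (q n : ℝ) ^ α ≤ (q (n + 1) : ℝ) ∧ (q (n + 1) : ℝ) < ((q n : ℝ) + 1) ^ α - 1) :
    (∀ n : ℕ, 1 ≤ n →
      (q n : ℝ) ^ ((α ^ n)⁻¹) ≤ (q (n + 1) : ℝ) ^ ((α ^ (n + 1))⁻¹)) ∧
    (∀ n : ℕ, 1 ≤ n →
      ((q (n + 1) : ℝ) + 1) ^ ((α ^ (n + 1))⁻¹) < ((q n : ℝ) + 1) ^ ((α ^ n)⁻¹)) ∧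
    (∀ n m : ℕ, 1 ≤ n → 1 ≤ m →
      (q n : ℝ) ^ ((α ^ n)⁻¹) < ((q m : ℝ) + 1) ^ ((α ^ m)⁻¹)) := by
  have hα0 : (0:ℝ) < α := lt_trans one_pos hα
  have hαne : α ≠ 0 := ne_of_gt hα0
  have hpow : ∀ n : ℕ, (0:ℝ) < α ^ n := fun n => pow_pos hα0 n
  have hinv : ∀ n : ℕ, (0:ℝ) < (α ^ n)⁻¹ := fun n => inv_pos.mpr (hpow n)
  have hexp : ∀ n : ℕ, α * (α ^ (n+1))⁻¹ = (α ^ n)⁻¹ := by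
    intro n
    rw [pow_succ]
    field_simp
  have hqn0 : ∀ n : ℕ, (0:ℝ) ≤ (q n : ℝ) := fun n => Nat.cast_nonneg _
  -- first part
  have h1 : ∀ n : ℕ, 1 ≤ n →
      (q n : ℝ) ^ ((α ^ n)⁻¹) ≤ (q (n + 1) : ℝ) ^ ((α ^ (n + 1))⁻¹) := by
    intro n hn
    have key : (q n : ℝ) ^ ((α ^ n)⁻¹) = ((q n : ℝ) ^ α) ^ ((α ^ (n+1))⁻¹) := by
      rw [← Real.rpow_mul (hqn0 n), hexp n]
    rw [key]
    exact Real.rpow_le_rpow (Real.rpow_nonneg (hqn0 n) α) (hrec n hn).1 (le_of_lt (hinv (n+1)))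
  -- second part
  have h2 : ∀ n : ℕ, 1 ≤ n →
      ((q (n + 1) : ℝ) + 1) ^ ((α ^ (n + 1))⁻¹) < ((q n : ℝ) + 1) ^ ((α ^ n)⁻¹) := by
    intro n hn
    have key : ((q n : ℝ) + 1) ^ ((α ^ n)⁻¹) = (((q n : ℝ) + 1) ^ α) ^ ((α ^ (n+1))⁻¹) := by
      rw [← Real.rpow_mul (by positivity), hexp n]
    rw [key]
    have hlt : (q (n+1) : ℝ) + 1 < ((q n : ℝ) + 1) ^ α := by
      have := (hrec n hn).2
      linarith
    exact Real.rpow_lt_rpow (by positivity) hlt (hinv (n+1))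
  refine ⟨h1, h2, ?_⟩
  -- general monotonicity
  have hu : ∀ n m : ℕ, 1 ≤ n → n ≤ m →
      (q n : ℝ) ^ ((α ^ n)⁻¹) ≤ (q m : ℝ) ^ ((α ^ m)⁻¹) := by
    intro n m hn hnm
    induction m, hnm using Nat.le_induction with
    | base => exact le_refl _
    | succ k hk ih => exact le_trans ih (h1 k (le_trans hn hk))
  have hv : ∀ n m : ℕ, 1 ≤ n → n ≤ m →
      ((q m : ℝ) + 1) ^ ((α ^ m)⁻¹) ≤ ((q n : ℝ) + 1) ^ ((α ^ n)⁻¹) := by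
    intro n m hn hnm
    induction m, hnm using Nat.le_induction with
    | base => exact le_refl _
    | succ k hk ih => exact le_trans (le_of_lt (h2 k (le_trans hn hk))) ih
  intro n m hn hm
  have hk1 : 1 ≤ max n m := le_trans hn (le_max_left n m)
  have huv : (q (max n m) : ℝ) ^ ((α ^ (max n m))⁻¹) <
      ((q (max n m) : ℝ) + 1) ^ ((α ^ (max n m))⁻¹) :=
    Real.rpow_lt_rpow (hqn0 _) (by linarith [hqn0 (max n m)]) (hinv _)
  calc (q n : ℝ) ^ ((α ^ n)⁻¹) ≤ (q (max n m) : ℝ) ^ ((α ^ (max n m))⁻¹) :=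
        hu n (max n m) hn (le_max_left n m)
    _ < ((q (max n m) : ℝ) + 1) ^ ((α ^ (max n m))⁻¹) := huv
    _ ≤ ((q m : ℝ) + 1) ^ ((α ^ m)⁻¹) := hv m (max n m) hm (le_max_right n m)
end

section
/- Let α > 1 and let (q_n) be a sequence of primes satisfying q_n^α ≤ q_{n+1} < (q_n+1)^α − 1 for all n ≥ 1. Let A = sup_n q_n^(α^(−n)). Then for every n ≥ 1, q_n ≤ A^(α^n) < q_n + 1, and hence ⌊A^(α^n)⌋ = q_n. -/
theorem stmt_15 (α : ℝ) (hα : 1 < α) (q : ℕ → ℕ)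
    (hq : ∀ n : ℕ, 1 ≤ n → (q n).Prime)
    (hrec : ∀ n : ℕ, 1 ≤ n →
      (q n : ℝ) ^ α ≤ (q (n + 1) : ℝ) ∧ (q (n + 1) : ℝ) < ((q n : ℝ) + 1) ^ α - 1)
    (A : ℝ) (hA : A = ⨆ n : ℕ, (q (n + 1) : ℝ) ^ ((α ^ (n + 1))⁻¹)) :
    ∀ n : ℕ, 1 ≤ n →
      (q n : ℝ) ≤ A ^ (α ^ n) ∧ A ^ (α ^ n) < (q n : ℝ) + 1 ∧
      ⌊A ^ (α ^ n)⌋ = (q n : ℤ) := by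
  have hα0 : (0:ℝ) < α := lt_trans one_pos hα
  have hpow : ∀ n : ℕ, (0:ℝ) < α ^ n := fun n => pow_pos hα0 n
  have hqpos : ∀ n : ℕ, (0:ℝ) < (q (n+1) : ℝ) := by
    intro n
    exact_mod_cast (hq (n+1) (by omega)).pos
  set f : ℕ → ℝ := fun n => (q (n+1) : ℝ) ^ ((α ^ (n+1))⁻¹) with hf
  set g : ℕ → ℝ := fun n => ((q (n+1) : ℝ) + 1) ^ ((α ^ (n+1))⁻¹) with hg
  have hexp : ∀ n : ℕ, α * (α ^ (n+2))⁻¹ = (α ^ (n+1))⁻¹ := by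
    intro n
    rw [pow_succ]
    field_simp
  have hfmono : Monotone f := by
    apply monotone_nat_of_le_succ
    intro n
    have h1 := (hrec (n+1) (by omega)).1
    have h2 : ((q (n+1):ℝ) ^ α) ^ ((α ^ (n+2))⁻¹) ≤ (q (n+2):ℝ) ^ ((α ^ (n+2))⁻¹) :=
      Real.rpow_le_rpow (Real.rpow_nonneg (hqpos n).le _) h1 (inv_nonneg.2 (hpow _).le)
    calc f n = (q (n+1):ℝ) ^ (α * (α ^ (n+2))⁻¹) := by rw [hexp n]
      _ = ((q (n+1):ℝ) ^ α) ^ ((α ^ (n+2))⁻¹) := Real.rpow_mul (hqpos n).le _ _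
      _ ≤ (q (n+2):ℝ) ^ ((α ^ (n+2))⁻¹) := h2
      _ = f (n+1) := rfl
  have hgstep : ∀ n : ℕ, g (n+1) < g n := by
    intro n
    have h1 := (hrec (n+1) (by omega)).2
    have h1' : (q (n+2):ℝ) + 1 < ((q (n+1):ℝ) + 1) ^ α := by linarith
    have h2 : ((q (n+2):ℝ) + 1) ^ ((α ^ (n+2))⁻¹) < (((q (n+1):ℝ) + 1) ^ α) ^ ((α ^ (n+2))⁻¹) :=
      Real.rpow_lt_rpow (by positivity) h1' (inv_pos.2 (hpow _))
    calc g (n+1) = ((q (n+2):ℝ) + 1) ^ ((α ^ (n+2))⁻¹) := rfl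
      _ < (((q (n+1):ℝ) + 1) ^ α) ^ ((α ^ (n+2))⁻¹) := h2
      _ = ((q (n+1):ℝ) + 1) ^ (α * (α ^ (n+2))⁻¹) := (Real.rpow_mul (by positivity) _ _).symm
      _ = g n := by rw [hexp n]
  have hganti : Antitone g := antitone_nat_of_succ_le (fun n => (hgstep n).le)
  have hflg : ∀ n, f n < g n := by
    intro n
    exact Real.rpow_lt_rpow (hqpos n).le (lt_add_one _) (inv_pos.2 (hpow _))
  have hfg : ∀ m n : ℕ, f m ≤ g n := by
    intro m n
    rcases le_total m n with h | h
    · exact le_of_lt (lt_of_le_of_lt (hfmono h) (hflg n))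
    · exact le_of_lt (lt_of_lt_of_le (hflg m) (hganti h))
  have hbdd : BddAbove (Set.range f) := ⟨g 0, by rintro x ⟨n, rfl⟩; exact hfg n 0⟩
  have hAle : ∀ n, f n ≤ A := fun n => hA ▸ le_ciSup hbdd n
  have hAge : ∀ n, A ≤ g n := fun n => hA ▸ ciSup_le (fun m => hfg m n)
  have hA0 : 0 ≤ A := le_trans (Real.rpow_pos_of_pos (hqpos 0) _).le (hAle 0)
  have hcancel : ∀ n : ℕ, (α ^ (n+1))⁻¹ * α ^ (n+1) = 1 := fun n =>
    inv_mul_cancel₀ (hpow (n+1)).ne'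
  intro n hn
  obtain ⟨k, rfl⟩ : ∃ k, n = k + 1 := ⟨n - 1, by omega⟩
  have hlow : (q (k+1) : ℝ) ≤ A ^ (α ^ (k+1)) := by
    have h := Real.rpow_le_rpow (Real.rpow_nonneg (hqpos k).le _) (hAle k) (hpow (k+1)).le
    calc (q (k+1) : ℝ) = (q (k+1) : ℝ) ^ ((α ^ (k+1))⁻¹ * α ^ (k+1)) := by
          rw [hcancel k, Real.rpow_one]
      _ = (f k) ^ (α ^ (k+1)) := Real.rpow_mul (hqpos k).le _ _
      _ ≤ A ^ (α ^ (k+1)) := h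
  have hAlt : A < g k := lt_of_le_of_lt (hAge (k+1)) (hgstep k)
  have hhigh : A ^ (α ^ (k+1)) < (q (k+1) : ℝ) + 1 := by
    have h := Real.rpow_lt_rpow hA0 hAlt (hpow (k+1))
    calc A ^ (α ^ (k+1)) < (g k) ^ (α ^ (k+1)) := h
      _ = ((q (k+1):ℝ) + 1) ^ ((α ^ (k+1))⁻¹ * α ^ (k+1)) :=
          (Real.rpow_mul (by positivity) _ _).symm
      _ = (q (k+1):ℝ) + 1 := by rw [hcancel k, Real.rpow_one]
  refine ⟨hlow, hhigh, ?_⟩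
  rw [Int.floor_eq_iff]
  constructor
  · exact_mod_cast hlow
  · push_cast
    exact hhigh
end
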